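/- Let I be a monomial ideal in R and let b_0, b_1, b_2 be distinct variables satisfying condition (⋆) with respect to I, and assume that b_1b_2 divides no element of G(I). Fix a monomial order > with b_0 > b_1 > b_2 and set f = b_0 + b_1 + b_2. For M ∈ G(I), let M̂ = b_1^{d_{b_0}(M)} · M / b_0^{d_{b_0}(M)}. Then ini((I, f)) is generated by b_0, together with the monomials M̂ for all M ∈ G(I), together with the monomials lcm(X, M')·b_2² for all monomials X, M' such that b_1X ∈ G(I) and b_0b_2M' ∈ G(I). -/

import Mathlib

open MvPolynomial

variable {σ k : Type*} [Field k]

/-- `I` is a monomial ideal if it is generated by monomials. -/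
def IsMonomialIdeal (I : Ideal (MvPolynomial σ k)) : Prop :=
  ∃ S : Set (σ →₀ ℕ),
    I = Ideal.span ((fun a => (monomial a (1 : k) : MvPolynomial σ k)) '' S)

/-- The exponents of the minimal monomial generators `G(I)` of a monomial ideal `I`:
the monomials in `I` that are minimal with respect to divisibility
(`x^b ∣ x^a ↔ b ≤ a`). -/
def minimalGens (I : Ideal (MvPolynomial σ k)) : Set (σ →₀ ℕ) :=
  {a | (monomial a (1 : k) : MvPolynomial σ k) ∈ I ∧
    ∀ b : σ →₀ ℕ, (monomial b (1 : k) : MvPolynomial σ k) ∈ I → b ≤ a → b = a}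

/-- The exponent of the leading monomial of `f` with respect to the monomial order `m`. -/
noncomputable def mdeg (m : MonomialOrder σ) (f : MvPolynomial σ k) : σ →₀ ℕ :=
  m.toSyn.symm (f.support.sup fun a => m.toSyn a)

/-- The leading term `in(f)` of `f` with respect to the monomial order `m`. -/
noncomputable def ltm (m : MonomialOrder σ) (f : MvPolynomial σ k) : MvPolynomial σ k :=
  monomial (mdeg m f) (f.coeff (mdeg m f))

/-- The initial ideal `ini(J)` of an ideal `J` with respect to the monomial order `m`:
the ideal generated by the leading terms of the nonzero elements of `J`. -/
noncomputable def iniIdeal (m : MonomialOrder σ) (J : Ideal (MvPolynomial σ k)) :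
    Ideal (MvPolynomial σ k) :=
  Ideal.span {p | ∃ g ∈ J, g ≠ 0 ∧ p = ltm m g}

/-- For an exponent `a`, the exponent of `M̂ = b₁^{d_{b₀}(M)} · M / b₀^{d_{b₀}(M)}`,
obtained from `M = x^a` by replacing every factor `b₀` by `b₁`. -/
noncomputable def hatExp (b0 b1 : σ) (a : σ →₀ ℕ) : σ →₀ ℕ :=
  a - Finsupp.single b0 (a b0) + Finsupp.single b1 (a b0)

/-!
Substituting `b₀ ↦ -(b₁ + b₂)` kills `f` and keeps the leading term of every polynomial whose
leading monomial is prime to `b₀`. It maps `(I, f)` into `C + (b₁ + b₂)·Q`, where `C` is generated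
by the `M ∈ G(I)` prime to `b₀` and the `lcm(X, M')·b₂²`, and `Q` by the `M / b₀`.

The monomials of `C` and the `(b₁ + b₂)·x^β`, `x^β ∈ Q`, form a Gröbner basis: splitting
`c + (b₁ + b₂)q` according to whether `b₁x^β ∈ C` for the monomials `x^β` of `q`, the first part
lies in `C` because `b₁x^β ∈ C` and `x^β ∈ Q` force `b₂x^β ∈ C` (this is where (⋆) and
`b₁b₂ ∤ G(I)` enter, the witness being an `lcm(X, M')·b₂²`), and on the rest no cancellation of
leading terms can occur. So every leading monomial lies in `C + b₁Q`, which is generated by the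
`M̂` and the `lcm(X, M')·b₂²`. Conversely `b₀ = in(f)`, `M̂ = in((M / b₀)(b₁ + b₂))` when `b₀ ∣ M`,
and `lcm(X, M')·b₂² ∈ (I, f)`.
-/

open MonomialOrder
open Finsupp (single)

section MonomialIdeals

variable {R : Type*} [CommSemiring R]

theorem MvPolynomial.monomial_mem_of_le {J : Ideal (MvPolynomial σ R)} {a b : σ →₀ ℕ}
    (ha : monomial a (1 : R) ∈ J) (hab : a ≤ b) : monomial b (1 : R) ∈ J := by
  rw [← tsub_add_cancel_of_le hab, ← mul_one (1 : R), ← monomial_mul]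
  exact J.mul_mem_left _ ha

noncomputable def spanMonomials (S : Set (σ →₀ ℕ)) : Ideal (MvPolynomial σ R) :=
  Ideal.span ((fun a => monomial a 1) '' S)

theorem monomial_mem_spanMonomials_iff [Nontrivial R] {S : Set (σ →₀ ℕ)} {b : σ →₀ ℕ} :
    monomial b (1 : R) ∈ spanMonomials S ↔ ∃ a ∈ S, a ≤ b := by
  refine ⟨fun h => ?_, fun ⟨a, ha, hab⟩ => monomial_mem_of_le (Ideal.subset_span ⟨a, ha, rfl⟩) hab⟩
  exact mem_ideal_span_monomial_image.1 h b (by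
    classical rw [support_monomial, if_neg one_ne_zero]; exact Finset.mem_singleton_self b)

end MonomialIdeals

theorem isMonomialIdeal_spanMonomials (S : Set (σ →₀ ℕ)) :
    IsMonomialIdeal (spanMonomials S : Ideal (MvPolynomial σ k)) :=
  ⟨S, rfl⟩

namespace IsMonomialIdeal

variable {I : Ideal (MvPolynomial σ k)}

theorem monomial_mem_of_mem_support (hI : IsMonomialIdeal I) {p : MvPolynomial σ k} (hp : p ∈ I)
    {b : σ →₀ ℕ} (hb : b ∈ p.support) : monomial b (1 : k) ∈ I := by
  obtain ⟨S, rfl⟩ := hI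
  obtain ⟨a, ha, hab⟩ := mem_ideal_span_monomial_image.1 hp b hb
  exact monomial_mem_of_le (Ideal.subset_span ⟨a, ha, rfl⟩) hab

theorem exists_mem_minimalGens_le {a : σ →₀ ℕ} (ha : monomial a (1 : k) ∈ I) :
    ∃ g ∈ minimalGens I, g ≤ a := by
  obtain ⟨g, ⟨hga, hgI⟩, hmin⟩ :=
    wellFounded_lt.has_min {g | g ≤ a ∧ monomial g (1 : k) ∈ I} ⟨a, le_rfl, ha⟩
  exact ⟨g, ⟨hgI, fun b hbI hbg => by_contra fun hne =>
    hmin b ⟨hbg.trans hga, hbI⟩ (lt_of_le_of_ne hbg hne)⟩, hga⟩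

theorem le_spanMonomials_minimalGens (hI : IsMonomialIdeal I) :
    I ≤ spanMonomials (minimalGens I) := by
  obtain ⟨S, hS⟩ := hI
  conv_lhs => rw [hS]
  rw [Ideal.span_le]
  rintro _ ⟨a, ha, rfl⟩
  have haI : monomial a (1 : k) ∈ I := hS ▸ Ideal.subset_span ⟨a, ha, rfl⟩
  obtain ⟨g, hg, hga⟩ := exists_mem_minimalGens_le haI
  exact monomial_mem_spanMonomials_iff.2 ⟨g, hg, hga⟩

end IsMonomialIdeal

section LeadingTerms

variable {m : MonomialOrder σ} {R : Type*} [CommSemiring R]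

theorem MonomialOrder.leadingTerm_add_of_lt {f g : MvPolynomial σ R}
    (h : m.degree g ≺[m] m.degree f) : m.leadingTerm (f + g) = m.leadingTerm f := by
  rw [leadingTerm, leadingTerm, degree_add_of_lt h, leadingCoeff_add_of_lt h]

variable [Nontrivial R] {i j : σ}

theorem MonomialOrder.degree_X_add_X (hji : m.toSyn (single j 1) < m.toSyn (single i 1)) :
    m.degree (X i + X j : MvPolynomial σ R) = single i 1 := by
  rw [degree_add_of_lt (by rwa [degree_X, degree_X]), degree_X]

theorem MonomialOrder.leadingTerm_X_add_X (hji : m.toSyn (single j 1) < m.toSyn (single i 1)) :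
    m.leadingTerm (X i + X j : MvPolynomial σ R) = X i := by
  rw [leadingTerm_add_of_lt (by rwa [degree_X, degree_X]), X, leadingTerm_monomial]

theorem MonomialOrder.leadingTerm_X_add_X_add_X {l : σ}
    (hji : m.toSyn (single j 1) < m.toSyn (single i 1))
    (hlj : m.toSyn (single l 1) < m.toSyn (single j 1)) :
    m.leadingTerm (X i + X j + X l : MvPolynomial σ R) = X i := by
  rw [leadingTerm_add_of_lt (by rw [degree_X_add_X hji, degree_X]; exact hlj.trans hji),
    leadingTerm_X_add_X hji]

end LeadingTerms

section IniIdeal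

variable {m : MonomialOrder σ} {J : Ideal (MvPolynomial σ k)}

theorem leadingTerm_mem_iniIdeal {g : MvPolynomial σ k} (hg : g ∈ J) (hg0 : g ≠ 0) :
    m.leadingTerm g ∈ iniIdeal m J :=
  Ideal.subset_span ⟨g, hg, hg0, rfl⟩

theorem monomial_mem_iniIdeal {e : σ →₀ ℕ} (he : monomial e (1 : k) ∈ J) :
    monomial e 1 ∈ iniIdeal m J := by
  simpa only [leadingTerm_monomial] using
    leadingTerm_mem_iniIdeal (m := m) he (monomial_eq_zero.not.2 one_ne_zero)

end IniIdeal

section GroebnerBasis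

variable {m : MonomialOrder σ} {C Q : Ideal (MvPolynomial σ k)} {i j : σ}

theorem monomial_degree_mem_or_of_forall_not_mem (hC : IsMonomialIdeal C)
    (hji : m.toSyn (single j 1) < m.toSyn (single i 1)) {c q : MvPolynomial σ k} (hc : c ∈ C)
    (hq : ∀ β ∈ q.support, monomial (single i 1 + β) (1 : k) ∉ C)
    (hr : c + (X i + X j) * q ≠ 0) :
    monomial (m.degree (c + (X i + X j) * q)) (1 : k) ∈ C ∨
      ∃ β ∈ q.support, m.degree (c + (X i + X j) * q) = single i 1 + β := by
  rcases eq_or_ne q 0 with rfl | hq0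
  · rw [mul_zero, add_zero] at hr ⊢
    exact Or.inl (hC.monomial_mem_of_mem_support hc (m.degree_mem_support hr))
  have hℓ : (X i + X j : MvPolynomial σ k) ≠ 0 := fun h => by
    simpa [h, degree_zero] using (m.degree_X_add_X (R := k) hji).symm
  have hℓq : m.degree ((X i + X j) * q) = single i 1 + m.degree q := by
    rw [degree_mul hℓ hq0, degree_X_add_X hji]
  rcases eq_or_ne c 0 with rfl | hc0
  · rw [zero_add, hℓq]
    exact Or.inr ⟨_, m.degree_mem_support hq0, rfl⟩
  have hcC := hC.monomial_mem_of_mem_support hc (m.degree_mem_support hc0)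
  rcases lt_trichotomy (m.toSyn (m.degree c)) (m.toSyn (m.degree ((X i + X j) * q)))
    with h | h | h
  · rw [degree_add_eq_right_of_lt h, hℓq]
    exact Or.inr ⟨_, m.degree_mem_support hq0, rfl⟩
  · rw [m.toSyn.injective h, hℓq] at hcC
    exact absurd hcC (hq _ (m.degree_mem_support hq0))
  · rw [degree_add_of_lt h]
    exact Or.inl hcC

theorem monomial_degree_mem_sup_span_X_mul (hC : IsMonomialIdeal C) (hQ : IsMonomialIdeal Q)
    (hji : m.toSyn (single j 1) < m.toSyn (single i 1))
    (habsorb : ∀ β, monomial (single i 1 + β) (1 : k) ∈ C → monomial β 1 ∈ Q →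
      monomial (single j 1 + β) 1 ∈ C)
    {r : MvPolynomial σ k} (hr : r ∈ C ⊔ Ideal.span {X i + X j} * Q) (hr0 : r ≠ 0) :
    monomial (m.degree r) (1 : k) ∈ C ⊔ Ideal.span {X i} * Q := by
  classical
  obtain ⟨c, hc, _, hℓq, rfl⟩ := Submodule.mem_sup.1 hr
  obtain ⟨q, hq, rfl⟩ := Ideal.mem_span_singleton_mul.1 hℓq
  set P : (σ →₀ ℕ) → Prop := fun β => monomial (single i 1 + β) (1 : k) ∈ C
  set q₁ := ∑ β ∈ q.support with P β, monomial β (coeff β q)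
  set q₂ := ∑ β ∈ q.support with ¬ P β, monomial β (coeff β q)
  have hsplit : c + (X i + X j) * q = (c + (X i + X j) * q₁) + (X i + X j) * q₂ := by
    rw [add_assoc, ← mul_add, Finset.sum_filter_add_sum_filter_not, ← q.as_sum]
  have hq₁ : (X i + X j) * q₁ ∈ C := by
    rw [Finset.mul_sum]
    refine C.sum_mem fun β hβ => ?_
    obtain ⟨hβq, hβP⟩ := Finset.mem_filter.1 hβ
    rw [← mul_one (coeff β q), ← C_mul_monomial, mul_left_comm, add_mul, X, X, monomial_mul,
      monomial_mul, one_mul]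
    exact C.mul_mem_left _ (C.add_mem hβP (habsorb β hβP (hQ.monomial_mem_of_mem_support hq hβq)))
  have hq₂ : ∀ β ∈ q₂.support, β ∈ q.support ∧ ¬ P β := by
    intro β hβ
    rw [mem_support_iff, coeff_sum] at hβ
    simp_rw [coeff_monomial] at hβ
    rw [Finset.sum_ite_eq'] at hβ
    exact Finset.mem_filter.1 (by by_contra h; exact hβ (if_neg h))
  rw [hsplit] at hr0 ⊢
  rcases monomial_degree_mem_or_of_forall_not_mem hC hji (C.add_mem hc hq₁)
    (fun β hβ => (hq₂ β hβ).2) hr0 with h | ⟨β, hβ, hdeg⟩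
  · exact Ideal.mem_sup_left h
  · rw [hdeg, ← one_mul (1 : k), ← monomial_mul]
    exact Ideal.mem_sup_right (Ideal.mul_mem_mul (Ideal.mem_span_singleton_self _)
      (hQ.monomial_mem_of_mem_support hq (hq₂ β hβ).1))

end GroebnerBasis

section Substitution

variable {m : MonomialOrder σ} {R : Type*} [CommSemiring R]

theorem MonomialOrder.degree_aeval_monomial_le {x : σ → MvPolynomial σ R}
    (hx : ∀ s, m.degree (x s) ≼[m] single s 1) (a : σ →₀ ℕ) (c : R) :
    m.degree (aeval x (monomial a c)) ≼[m] a := by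
  rw [aeval_monomial, algebraMap_eq, Finsupp.prod]
  calc m.toSyn (m.degree (C c * ∏ s ∈ a.support, x s ^ a s))
      ≤ m.toSyn (m.degree (C c) + m.degree (∏ s ∈ a.support, x s ^ a s)) := degree_mul_le
    _ = m.toSyn (m.degree (∏ s ∈ a.support, x s ^ a s)) := by rw [degree_C, zero_add]
    _ ≤ m.toSyn (∑ s ∈ a.support, m.degree (x s ^ a s)) := degree_prod_le
    _ ≤ m.toSyn (∑ s ∈ a.support, single s (a s)) := by
      simp only [map_sum]
      refine Finset.sum_le_sum fun s _ => (degree_pow_le _).trans ?_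
      rw [map_nsmul, ← Finsupp.smul_single_one, map_nsmul]
      exact nsmul_le_nsmul_right (hx s) _
    _ = m.toSyn a := by rw [← Finsupp.sum, Finsupp.sum_single]

theorem MonomialOrder.degree_aeval_le {x : σ → MvPolynomial σ R}
    (hx : ∀ s, m.degree (x s) ≼[m] single s 1) (p : MvPolynomial σ R) :
    m.degree (aeval x p) ≼[m] m.degree p := by
  conv_lhs => rw [p.as_sum, map_sum]
  exact degree_sum_le.trans
    (Finset.sup_le fun a ha => (degree_aeval_monomial_le hx a _).trans (m.le_degree ha))

theorem aeval_update_X_monomial [DecidableEq σ] {s : σ} (h : MvPolynomial σ R) {a : σ →₀ ℕ}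
    (ha : a s = 0) (c : R) : aeval (Function.update X s h) (monomial a c) = monomial a c := by
  rw [aeval_monomial, monomial_eq, algebraMap_eq]
  congr 1
  refine Finsupp.prod_congr fun t ht => ?_
  rw [Function.update_of_ne (by rintro rfl; exact Finsupp.mem_support_iff.1 ht ha)]

end Substitution

theorem MonomialOrder.leadingTerm_aeval_update_X {m : MonomialOrder σ} {R : Type*} [CommRing R]
    [DecidableEq σ] {s : σ} {h : MvPolynomial σ R} (hh : m.degree h ≼[m] single s 1)
    {p : MvPolynomial σ R} (hp : m.degree p s = 0) :
    m.leadingTerm (aeval (Function.update X s h) p) = m.leadingTerm p := by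
  by_cases hp0 : m.degree p = 0
  · rw [eq_C_of_degree_eq_zero hp0, aeval_C, algebraMap_eq]
  have hx : ∀ t, m.degree (Function.update X s h t) ≼[m] single t 1 := by
    intro t
    rcases eq_or_ne t s with rfl | ht
    · rwa [Function.update_self]
    · rw [Function.update_of_ne ht]
      exact degree_X_le_single
  have hsplit : aeval (Function.update X s h) p
      = m.leadingTerm p + aeval (Function.update X s h) (p - m.leadingTerm p) := by
    rw [map_sub, leadingTerm, aeval_update_X_monomial h hp, add_sub_cancel]
  rw [hsplit, leadingTerm_add_of_lt, leadingTerm_leadingTerm]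
  rw [degree_leadingTerm]
  exact (degree_aeval_le hx _).trans_lt (degree_sub_leadingTerm_lt_degree hp0)

section LinearFormSum

variable (I : Ideal (MvPolynomial σ k)) (b0 b1 b2 : σ)

def minimalGensFree : Set (σ →₀ ℕ) :=
  {a | a ∈ minimalGens I ∧ a b0 = 0}

/-- The exponents of `M / b₀` for the `M ∈ G(I)` divisible by `b₀`. -/
def minimalGensQuot : Set (σ →₀ ℕ) :=
  {n | single b0 1 + n ∈ minimalGens I}

def lcmExps : Set (σ →₀ ℕ) :=
  {t | ∃ x m', single b1 1 + x ∈ minimalGens I ∧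
    single b0 1 + single b2 1 + m' ∈ minimalGens I ∧ t = x ⊔ m' + single b2 2}

noncomputable abbrev freeIdeal : Ideal (MvPolynomial σ k) :=
  spanMonomials (minimalGensFree I b0 ∪ lcmExps I b0 b1 b2)

def iniGens : Set (MvPolynomial σ k) :=
  {(X b0 : MvPolynomial σ k)}
    ∪ {p | ∃ a ∈ minimalGens I, p = monomial (hatExp b0 b1 a) (1 : k)}
    ∪ {p | ∃ x m' : σ →₀ ℕ,
        single b1 1 + x ∈ minimalGens I ∧ single b0 1 + single b2 1 + m' ∈ minimalGens I ∧
        p = monomial (x ⊔ m' + single b2 2) (1 : k)}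

variable {I b0 b1 b2}

theorem hatExp_of_apply_eq_zero {a : σ →₀ ℕ} (h : a b0 = 0) : hatExp b0 b1 a = a := by
  simp [hatExp, h]

theorem hatExp_single_add {n : σ →₀ ℕ} (h : n b0 = 0) :
    hatExp b0 b1 (single b0 1 + n) = single b1 1 + n := by
  rw [hatExp, Finsupp.add_apply, h, Finsupp.single_eq_same, add_zero, add_tsub_cancel_left,
    add_comm]

theorem apply_eq_zero_of_mem_minimalGensQuot (hb0 : ∀ a ∈ minimalGens I, a b0 ≤ 1)
    {n : σ →₀ ℕ} (hn : n ∈ minimalGensQuot I b0) : n b0 = 0 := by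
  simpa only [Finsupp.coe_add, Pi.add_apply, Finsupp.single_eq_same, add_le_iff_nonpos_right,
    nonpos_iff_eq_zero] using hb0 _ hn

theorem Finsupp.exists_eq_single_add_of_pos {a : σ →₀ ℕ} {i : σ} (h : 0 < a i) :
    ∃ n, a = single i 1 + n :=
  ⟨a - single i 1, (add_tsub_cancel_of_le (Finsupp.single_le_iff.2 h)).symm⟩

theorem Finsupp.le_of_le_single_add {a κ : σ →₀ ℕ} {i : σ} (h : a ≤ single i 1 + κ)
    (hi : a i ≤ κ i) : a ≤ κ := by
  intro t
  rcases eq_or_ne t i with rfl | ht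
  · exact hi
  · simpa [Finsupp.single_apply, ht.symm] using h t

theorem Finsupp.single_add_single_le_iff {i j : σ} (hij : i ≠ j) {a : σ →₀ ℕ} :
    single i 1 + single j 1 ≤ a ↔ 1 ≤ a i ∧ 1 ≤ a j := by
  refine ⟨fun h => ⟨by simpa [hij.symm] using h i, by simpa [hij] using h j⟩,
    fun ⟨hi, hj⟩ t => ?_⟩
  rcases eq_or_ne t i with rfl | hti
  · simpa [hij.symm] using hi
  · rcases eq_or_ne t j with rfl | htj
    · simpa [hij] using hj
    · simp [hti.symm, htj.symm]

theorem apply_eq_zero_of_mem_lcmExps (h01 : b0 ≠ b1) (h12 : b1 ≠ b2)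
    (hb1 : ∀ a ∈ minimalGens I, a b1 ≤ 1)
    (h12div : ¬ ∃ a ∈ minimalGens I, single b1 1 + single b2 1 ≤ a) {t : σ →₀ ℕ}
    (ht : t ∈ lcmExps I b0 b1 b2) : t b1 = 0 := by
  obtain ⟨x, m', hx, hm', rfl⟩ := ht
  have hx1 := hb1 _ hx
  have hm'1 : m' b1 = 0 := by
    by_contra hne
    refine h12div ⟨_, hm', (Finsupp.single_add_single_le_iff h12).2 ⟨?_, ?_⟩⟩ <;>
      simp only [Finsupp.coe_add, Pi.add_apply, Finsupp.single_eq_same, ne_eq, h01, h12.symm,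
        not_false_eq_true, Finsupp.single_eq_of_ne', add_zero, zero_add] <;> omega
  simp only [Finsupp.coe_add, Pi.add_apply, Finsupp.single_eq_same, add_le_iff_nonpos_right,
    nonpos_iff_eq_zero, Finsupp.sup_apply, ne_eq, h12.symm, not_false_eq_true,
    Finsupp.single_eq_of_ne', add_zero, max_eq_zero] at hx1 ⊢
  omega

theorem monomial_single_add_mem_freeIdeal (h01 : b0 ≠ b1) (h02 : b0 ≠ b2) (h12 : b1 ≠ b2)
    (hstar1 : ∀ a ∈ minimalGens I, a b0 ≤ 1 ∧ a b1 ≤ 1 ∧ a b2 ≤ 1)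
    (hstar2 : ∀ a ∈ minimalGens I, 1 ≤ a b0 → 1 ≤ a b1 ∨ 1 ≤ a b2)
    (h12div : ¬ ∃ a ∈ minimalGens I, single b1 1 + single b2 1 ≤ a) (β : σ →₀ ℕ)
    (hC : monomial (single b1 1 + β) (1 : k) ∈ freeIdeal I b0 b1 b2)
    (hQ : monomial β (1 : k) ∈ spanMonomials (minimalGensQuot I b0)) :
    monomial (single b2 1 + β) (1 : k) ∈ freeIdeal I b0 b1 b2 := by
  rw [monomial_mem_spanMonomials_iff] at hC hQ ⊢
  obtain ⟨e, he, heβ⟩ := hC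
  obtain ⟨n, hn, hnβ⟩ := hQ
  have hdone : e ≤ β → ∃ e ∈ minimalGensFree I b0 ∪ lcmExps I b0 b1 b2, e ≤ single b2 1 + β :=
    fun h => ⟨e, he, h.trans le_add_self⟩
  by_cases he1 : e b1 = 0
  · exact hdone (Finsupp.le_of_le_single_add heβ (by omega))
  obtain ⟨heG, he0⟩ : e ∈ minimalGensFree I b0 := he.resolve_right fun heL =>
    he1 (apply_eq_zero_of_mem_lcmExps h01 h12 (fun a ha => (hstar1 a ha).2.1) h12div heL)
  have he1' : e b1 = 1 := by have := (hstar1 e heG).2.1; omega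
  by_cases hn1 : 1 ≤ n b1
  · exact hdone (Finsupp.le_of_le_single_add heβ (by have := hnβ b1; omega))
  have hn2 : n b2 = 1 := by
    have h1 := (hstar1 _ hn).2.2
    have h2 := hstar2 _ hn (by simp)
    simp only [Finsupp.coe_add, Pi.add_apply, ne_eq, h01, h02, not_false_eq_true,
      Finsupp.single_eq_of_ne', zero_add] at h1 h2
    omega
  have he2 : e b2 = 0 := by
    by_contra h
    exact h12div ⟨e, heG, (Finsupp.single_add_single_le_iff h12).2 ⟨by omega, by omega⟩⟩
  refine ⟨(e - single b1 1) ⊔ (n - single b2 1) + single b2 2, Or.inr ⟨_, _, ?_, ?_, rfl⟩,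
    fun t => ?_⟩
  · rwa [add_tsub_cancel_of_le (Finsupp.single_le_iff.2 (by omega))]
  · rwa [add_assoc, add_tsub_cancel_of_le (Finsupp.single_le_iff.2 (by omega))]
  · have het := heβ t
    have hnt := hnβ t
    rcases eq_or_ne t b1 with rfl | h1
    · simp only [Finsupp.coe_add, Pi.add_apply, Finsupp.single_eq_same, Finsupp.sup_apply,
        Finsupp.coe_tsub, Pi.sub_apply, ne_eq, h12, not_false_eq_true, Finsupp.single_eq_of_ne,
        tsub_zero, add_zero, zero_add, sup_le_iff, tsub_le_iff_right] at het hnt ⊢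
      omega
    rcases eq_or_ne t b2 with rfl | h2
    · simp only [Finsupp.coe_add, Pi.add_apply, ne_eq, h12, not_false_eq_true,
        Finsupp.single_eq_of_ne', zero_add, Finsupp.sup_apply, Finsupp.coe_tsub, Pi.sub_apply,
        tsub_zero, Finsupp.single_eq_same] at het hnt ⊢
      omega
    · simp only [Finsupp.coe_add, Pi.add_apply, ne_eq, h1.symm, h2.symm, not_false_eq_true,
        Finsupp.single_eq_of_ne', zero_add, Finsupp.sup_apply, Finsupp.coe_tsub, Pi.sub_apply,
        tsub_zero, add_zero, sup_le_iff] at het hnt ⊢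
      omega

theorem le_comap_aeval_update_X [DecidableEq σ] (hI : IsMonomialIdeal I) (h01 : b0 ≠ b1)
    (h02 : b0 ≠ b2) (hb0 : ∀ a ∈ minimalGens I, a b0 ≤ 1) :
    I ⊔ Ideal.span {X b0 + X b1 + X b2} ≤
      Ideal.comap (aeval (Function.update X b0 (-(X b1 + X b2))))
      (freeIdeal I b0 b1 b2 ⊔ Ideal.span {X b1 + X b2} * spanMonomials (minimalGensQuot I b0)) := by
  refine sup_le (hI.le_spanMonomials_minimalGens.trans ?_) ?_
  · rw [spanMonomials, Ideal.span_le]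
    rintro _ ⟨a, ha, rfl⟩
    rcases Nat.eq_zero_or_pos (a b0) with h0 | hpos
    · rw [SetLike.mem_coe, Ideal.mem_comap, aeval_update_X_monomial _ h0]
      exact Ideal.mem_sup_left (Ideal.subset_span ⟨a, Or.inl ⟨ha, h0⟩, rfl⟩)
    · obtain ⟨n, rfl⟩ := Finsupp.exists_eq_single_add_of_pos hpos
      dsimp only
      rw [SetLike.mem_coe, Ideal.mem_comap, monomial_single_add, pow_one, map_mul, aeval_X,
        Function.update_self,
        aeval_update_X_monomial _ (apply_eq_zero_of_mem_minimalGensQuot hb0 ha), neg_mul]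
      exact Ideal.mem_sup_right (neg_mem (Ideal.mul_mem_mul (Ideal.mem_span_singleton_self _)
        (Ideal.subset_span ⟨n, ha, rfl⟩)))
  · rw [Ideal.span_le, Set.singleton_subset_iff, SetLike.mem_coe, Ideal.mem_comap]
    simp [Function.update_of_ne h01.symm, Function.update_of_ne h02.symm]

theorem sup_span_X_mul_le_span_iniGens (hb0 : ∀ a ∈ minimalGens I, a b0 ≤ 1) :
    freeIdeal I b0 b1 b2 ⊔ Ideal.span {X b1} * spanMonomials (minimalGensQuot I b0)
      ≤ Ideal.span (iniGens I b0 b1 b2) := by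
  refine sup_le ?_ ?_
  · rw [freeIdeal, spanMonomials, Ideal.span_le]
    rintro _ ⟨a, ⟨ha, h0⟩ | ⟨x, m', hx, hm', rfl⟩, rfl⟩
    · exact Ideal.subset_span (Or.inl (Or.inr ⟨a, ha, by rw [hatExp_of_apply_eq_zero h0]⟩))
    · exact Ideal.subset_span (Or.inr ⟨x, m', hx, hm', rfl⟩)
  · rw [spanMonomials, Ideal.span_mul_span', Ideal.span_le]
    rintro _ ⟨_, rfl, _, ⟨n, hn, rfl⟩, rfl⟩
    refine Ideal.subset_span (Or.inl (Or.inr ⟨_, hn, ?_⟩))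
    dsimp only
    rw [hatExp_single_add (apply_eq_zero_of_mem_minimalGensQuot hb0 hn), X, monomial_mul, one_mul]

theorem monomial_hatExp_mem_iniIdeal {m : MonomialOrder σ} (hb0 : ∀ a ∈ minimalGens I, a b0 ≤ 1)
    (hord2 : m.toSyn (single b2 1) < m.toSyn (single b1 1)) {a : σ →₀ ℕ}
    (ha : a ∈ minimalGens I) :
    monomial (hatExp b0 b1 a) (1 : k) ∈ iniIdeal m (I ⊔ Ideal.span {X b0 + X b1 + X b2}) := by
  set J := I ⊔ Ideal.span {X b0 + X b1 + X b2}
  rcases Nat.eq_zero_or_pos (a b0) with h0 | hpos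
  · rw [hatExp_of_apply_eq_zero h0]
    exact monomial_mem_iniIdeal (Ideal.mem_sup_left ha.1)
  obtain ⟨n, rfl⟩ := Finsupp.exists_eq_single_add_of_pos hpos
  have hn0 := apply_eq_zero_of_mem_minimalGensQuot hb0 ha
  have hg : monomial n (1 : k) * (X b1 + X b2) ∈ J := by
    have : monomial n (1 : k) * (X b1 + X b2)
        = monomial n 1 * (X b0 + X b1 + X b2) - monomial (single b0 1 + n) 1 := by
      rw [monomial_single_add, pow_one]
      ring
    rw [this]
    exact J.sub_mem (J.mul_mem_left _ (Ideal.mem_sup_right (Ideal.mem_span_singleton_self _)))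
      (Ideal.mem_sup_left ha.1)
  have hLT : m.leadingTerm (monomial n (1 : k) * (X b1 + X b2))
      = monomial (hatExp b0 b1 (single b0 1 + n)) 1 := by
    rw [leadingTerm_mul, leadingTerm_monomial, leadingTerm_X_add_X hord2, hatExp_single_add hn0,
      X, monomial_mul, one_mul, add_comm]
  rw [← hLT]
  refine leadingTerm_mem_iniIdeal hg fun h => ?_
  rw [h, leadingTerm_zero] at hLT
  exact monomial_eq_zero.not.2 one_ne_zero hLT.symm

theorem monomial_lcm_mem_sup {x m' : σ →₀ ℕ} (hx : single b1 1 + x ∈ minimalGens I)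
    (hm' : single b0 1 + single b2 1 + m' ∈ minimalGens I) :
    monomial (x ⊔ m' + single b2 2) (1 : k) ∈ I ⊔ Ideal.span {X b0 + X b1 + X b2} := by
  set J := I ⊔ Ideal.span {X b0 + X b1 + X b2}
  have hsplit : monomial (x ⊔ m' + single b2 2) (1 : k) = monomial (x ⊔ m' + single b2 1) 1 *
      (X b0 + X b1 + X b2) - monomial (x ⊔ m' + single b2 1 + single b0 1) 1
      - monomial (x ⊔ m' + single b2 1 + single b1 1) 1 := by
    rw [X, X, X, mul_add, mul_add, monomial_mul, monomial_mul, monomial_mul, one_mul,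
      (by rw [add_assoc, ← Finsupp.single_add] : x ⊔ m' + single b2 2
        = x ⊔ m' + single b2 1 + single b2 1)]
    ring
  rw [hsplit]
  refine J.sub_mem (J.sub_mem (J.mul_mem_left _ (Ideal.mem_sup_right
    (Ideal.mem_span_singleton_self _))) (Ideal.mem_sup_left (monomial_mem_of_le hm'.1 fun t => ?_)))
    (Ideal.mem_sup_left (monomial_mem_of_le hx.1 fun t => ?_))
  · have := (le_sup_right : m' ≤ x ⊔ m') t
    simp only [Finsupp.add_apply]
    omega
  · have := (le_sup_left : x ≤ x ⊔ m') t
    simp only [Finsupp.add_apply]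
    omega

theorem iniIdeal_le_span_iniGens {m : MonomialOrder σ} (hI : IsMonomialIdeal I)
    (h01 : b0 ≠ b1) (h02 : b0 ≠ b2) (h12 : b1 ≠ b2)
    (hstar1 : ∀ a ∈ minimalGens I, a b0 ≤ 1 ∧ a b1 ≤ 1 ∧ a b2 ≤ 1)
    (hstar2 : ∀ a ∈ minimalGens I, 1 ≤ a b0 → 1 ≤ a b1 ∨ 1 ≤ a b2)
    (h12div : ¬ ∃ a ∈ minimalGens I, single b1 1 + single b2 1 ≤ a)
    (hord1 : m.toSyn (single b1 1) < m.toSyn (single b0 1))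
    (hord2 : m.toSyn (single b2 1) < m.toSyn (single b1 1)) :
    iniIdeal m (I ⊔ Ideal.span {X b0 + X b1 + X b2}) ≤ Ideal.span (iniGens I b0 b1 b2) := by
  classical
  have hb0 : ∀ a ∈ minimalGens I, a b0 ≤ 1 := fun a ha => (hstar1 a ha).1
  rw [iniIdeal, Ideal.span_le]
  rintro _ ⟨g, hg, hg0, rfl⟩
  change m.leadingTerm g ∈ _
  rw [← C_mul_leadingCoeff_monomial_degree]
  refine Ideal.mul_mem_left _ _ ?_
  rcases Nat.eq_zero_or_pos (m.degree g b0) with h0 | hpos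
  · set φ := aeval (R := k) (Function.update X b0 (-(X b1 + X b2) : MvPolynomial σ k))
    have hφ : m.leadingTerm (φ g) = m.leadingTerm g :=
      leadingTerm_aeval_update_X (by rw [degree_neg, degree_X_add_X hord2]; exact hord1.le) h0
    have hφ0 : φ g ≠ 0 := fun h => hg0 (by
      rw [← leadingTerm_eq_zero_iff (m := m), ← hφ, h, leadingTerm_zero])
    rw [← degree_leadingTerm, ← hφ, degree_leadingTerm]
    exact sup_span_X_mul_le_span_iniGens hb0
      (monomial_degree_mem_sup_span_X_mul (isMonomialIdeal_spanMonomials _)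
        (isMonomialIdeal_spanMonomials _) hord2
        (monomial_single_add_mem_freeIdeal h01 h02 h12 hstar1 hstar2 h12div)
        (le_comap_aeval_update_X hI h01 h02 hb0 hg) hφ0)
  · exact monomial_mem_of_le (Ideal.subset_span (Or.inl (Or.inl rfl)))
      (Finsupp.single_le_iff.2 hpos)

theorem span_iniGens_le_iniIdeal {m : MonomialOrder σ} (hb0 : ∀ a ∈ minimalGens I, a b0 ≤ 1)
    (hord1 : m.toSyn (single b1 1) < m.toSyn (single b0 1))
    (hord2 : m.toSyn (single b2 1) < m.toSyn (single b1 1)) :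
    Ideal.span (iniGens I b0 b1 b2) ≤ iniIdeal m (I ⊔ Ideal.span {X b0 + X b1 + X b2}) := by
  rw [Ideal.span_le]
  rintro _ ((rfl | ⟨a, ha, rfl⟩) | ⟨x, m', hx, hm', rfl⟩)
  · have hf := leadingTerm_X_add_X_add_X (m := m) (R := k) hord1 hord2
    have hmem := leadingTerm_mem_iniIdeal (m := m)
      (Ideal.mem_sup_right (Ideal.mem_span_singleton_self (X b0 + X b1 + X b2)) :
        X b0 + X b1 + X b2 ∈ I ⊔ _)
      fun h => X_ne_zero b0 (by rw [← hf, h, leadingTerm_zero])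
    rwa [hf] at hmem
  · exact monomial_hatExp_mem_iniIdeal hb0 hord2 ha
  · exact monomial_mem_iniIdeal (monomial_lcm_mem_sup hx hm')

end LinearFormSum

theorem stmt11_general
    (I : Ideal (MvPolynomial σ k)) (hI : IsMonomialIdeal I)
    (b0 b1 b2 : σ) (h01 : b0 ≠ b1) (h02 : b0 ≠ b2) (h12 : b1 ≠ b2)
    (hstar1 : ∀ a ∈ minimalGens I, a b0 ≤ 1 ∧ a b1 ≤ 1 ∧ a b2 ≤ 1)
    (hstar2 : ∀ a ∈ minimalGens I, 1 ≤ a b0 → 1 ≤ a b1 ∨ 1 ≤ a b2)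
    (h12div : ¬ ∃ a ∈ minimalGens I,
      Finsupp.single b1 1 + Finsupp.single b2 1 ≤ a)
    (m : MonomialOrder σ)
    (hord1 : m.toSyn (Finsupp.single b1 1) < m.toSyn (Finsupp.single b0 1))
    (hord2 : m.toSyn (Finsupp.single b2 1) < m.toSyn (Finsupp.single b1 1))
    (f : MvPolynomial σ k) (hf : f = X b0 + X b1 + X b2) :
    iniIdeal m (I ⊔ Ideal.span {f})
      = Ideal.span
          ({(X b0 : MvPolynomial σ k)}
            ∪ {p | ∃ a ∈ minimalGens I, p = monomial (hatExp b0 b1 a) (1 : k)}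
            ∪ {p | ∃ x m' : σ →₀ ℕ,
                (Finsupp.single b1 1 + x) ∈ minimalGens I ∧
                (Finsupp.single b0 1 + Finsupp.single b2 1 + m') ∈ minimalGens I ∧
                p = monomial (x ⊔ m' + Finsupp.single b2 2) (1 : k)}) := by
  subst hf
  exact le_antisymm
    (iniIdeal_le_span_iniGens hI h01 h02 h12 hstar1 hstar2 h12div hord1 hord2)
    (span_iniGens_le_iniIdeal (fun a ha => (hstar1 a ha).1) hord1 hord2)

/-- Let `I` be a monomial ideal and `b₀, b₁, b₂` distinct variables
satisfying condition (⋆) such that `b₁b₂` divides no element of `G(I)`.  Fix a monomial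
order with `b₀ > b₁ > b₂` and set `f = b₀ + b₁ + b₂`.  Then `ini((I, f))` is generated
by `b₀`, the monomials `M̂` for `M ∈ G(I)`, and the monomials `lcm(X, M')·b₂²` for
monomials `X, M'` with `b₁X ∈ G(I)` and `b₀b₂M' ∈ G(I)`. -/
theorem stmt11 [Fintype σ]
    (I : Ideal (MvPolynomial σ k)) (hI : IsMonomialIdeal I)
    (b0 b1 b2 : σ) (h01 : b0 ≠ b1) (h02 : b0 ≠ b2) (h12 : b1 ≠ b2)
    (hstar1 : ∀ a ∈ minimalGens I, a b0 ≤ 1 ∧ a b1 ≤ 1 ∧ a b2 ≤ 1)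
    (hstar2 : ∀ a ∈ minimalGens I, 1 ≤ a b0 → 1 ≤ a b1 ∨ 1 ≤ a b2)
    (h12div : ¬ ∃ a ∈ minimalGens I,
      Finsupp.single b1 1 + Finsupp.single b2 1 ≤ a)
    (m : MonomialOrder σ)
    (hord1 : m.toSyn (Finsupp.single b1 1) < m.toSyn (Finsupp.single b0 1))
    (hord2 : m.toSyn (Finsupp.single b2 1) < m.toSyn (Finsupp.single b1 1))
    (f : MvPolynomial σ k) (hf : f = X b0 + X b1 + X b2) :
    iniIdeal m (I ⊔ Ideal.span {f})
      = Ideal.span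
          ({(X b0 : MvPolynomial σ k)}
            ∪ {p | ∃ a ∈ minimalGens I, p = monomial (hatExp b0 b1 a) (1 : k)}
            ∪ {p | ∃ x m' : σ →₀ ℕ,
                (Finsupp.single b1 1 + x) ∈ minimalGens I ∧
                (Finsupp.single b0 1 + Finsupp.single b2 1 + m') ∈ minimalGens I ∧
                p = monomial (x ⊔ m' + Finsupp.single b2 2) (1 : k)}) :=
  stmt11_general I hI b0 b1 b2 h01 h02 h12 hstar1 hstar2 h12div m hord1 hord2 f hf
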